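/- Let T > 0, l ∈ [0,1), integers n_c, n_t ≥ 1, α_max ∈ (0,1), a = α_max/(T(1 − α_max)), and ν_1, …, ν_N ≥ 0 with S = Σ_j ν_j < min{ a / (Σ_{k=0}^{n_c−1} α_max^k), 1 / (T · Σ_{k=1}^{n_c−1} k·α_max^{k−1}) }. Define α(τ) = Tτ/(1+Tτ), γ(τ) = l + (1−l)(1 − exp(−12τ)), and δ(α,γ) = α^{n_c} Σ_{k=0}^{n_t−1} r^k + r^{n_t} with r = γ(1 − α^{n_c}). Let (τ̄_{−i})_{i=1}^N ∈ [0,a]^N be the unique solution of τ̄_{−i} = Σ_{j≠i} ν_j Σ_{k=0}^{n_c−1} α(τ̄_{−j})^k, and let τ̄ ∈ [0,a] be the unique solution of τ̄ = S Σ_{k=0}^{n_c−1} α(τ̄)^k. Suppose τ_max ∈ [0,a] satisfies α(τ_max)^{n_c} ≤ 1/n_t and γ(τ_max)^{n_t} ≤ 1/n_t, and suppose τ̄ ≤ τ_max. Then for every i = 1, …, N, the per-node discard probability satisfies δ(α(τ̄_{−i}), γ(τ̄_{−i})) ≤ δ(α(τ_max), γ(τ_max)); in particular, if δ(α(τ_max),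 γ(τ_max)) ≤ δ̄ for a target δ̄, then every node's discard probability is at most δ̄. -/

import Mathlib

/-!
The largest node rate `max_i τ̄_{−i}` is a subsolution of the scalar equation
`τ = S ∑_{k<n_c} α(τ)^k`, whose right-hand side is a contraction on `[0, a]` because `α ≤ α_max`
there and `S T ∑_k k α_max^{k-1} < 1`; hence `τ̄_{−i} ≤ τ̄ ≤ τ_max` for every node. Writing the
discard probability as one minus the delivery probability `(1 - b)(1 - γ) ∑_{k<n_t} (γ(1 - b))^k`,
with `b = α^{n_c}`, shows that it is nondecreasing in `b` and in `γ` on `[0, 1]`, and `α`, `γ`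
are nondecreasing in the attempt rate.
-/

open Finset Function

noncomputable def ccaFailProb (T τ : ℝ) : ℝ := T * τ / (1 + T * τ)

noncomputable def txFailProb (l τ : ℝ) : ℝ := l + (1 - l) * (1 - Real.exp (-12 * τ))

noncomputable def ccaAttempts (T : ℝ) (nc : ℕ) (τ : ℝ) : ℝ := ∑ k ∈ range nc, ccaFailProb T τ ^ k

/-- The discard probability `δ(α, γ)` of the paper is `discardProb nt (α ^ nc) γ`: here `b` is the
probability that channel access fails `nc` times in a row. -/
noncomputable def discardProb (nt : ℕ) (b γ : ℝ) : ℝ :=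
  b * ∑ k ∈ range nt, (γ * (1 - b)) ^ k + (γ * (1 - b)) ^ nt

section CCA

variable {T s t : ℝ}

lemma ccaFailProb_nonneg (hT : 0 ≤ T) (ht : 0 ≤ t) : 0 ≤ ccaFailProb T t := by
  unfold ccaFailProb; positivity

lemma ccaFailProb_le_one (hT : 0 ≤ T) (ht : 0 ≤ t) : ccaFailProb T t ≤ 1 := by
  rw [ccaFailProb, div_le_one (by positivity)]; linarith

lemma ccaFailProb_sub_eq (hT : 0 ≤ T) (hs : 0 ≤ s) (ht : 0 ≤ t) :
    ccaFailProb T t - ccaFailProb T s = T * (t - s) / ((1 + T * s) * (1 + T * t)) := by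
  have : 0 < 1 + T * s := by positivity
  have : 0 < 1 + T * t := by positivity
  unfold ccaFailProb; field_simp; ring

lemma ccaFailProb_monotoneOn (hT : 0 ≤ T) : MonotoneOn (ccaFailProb T) (Set.Ici 0) := by
  intro s (hs : 0 ≤ s) t (ht : 0 ≤ t) hst
  have : 0 ≤ T * (t - s) / ((1 + T * s) * (1 + T * t)) :=
    div_nonneg (mul_nonneg hT (sub_nonneg.2 hst)) (by positivity)
  linarith [ccaFailProb_sub_eq hT hs ht]

lemma ccaFailProb_sub_le (hT : 0 ≤ T) (hs : 0 ≤ s) (hst : s ≤ t) :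
    ccaFailProb T t - ccaFailProb T s ≤ T * (t - s) := by
  rw [ccaFailProb_sub_eq hT hs (hs.trans hst)]
  refine div_le_self (mul_nonneg hT (sub_nonneg.2 hst)) ?_
  nlinarith [mul_nonneg hT hs, mul_nonneg hT (hs.trans hst)]

lemma ccaFailProb_div_mul_one_sub (hT : T ≠ 0) {α : ℝ} (hα : α ≠ 1) :
    ccaFailProb T (α / (T * (1 - α))) = α := by
  have : 1 - α ≠ 0 := sub_ne_zero.2 hα.symm
  unfold ccaFailProb; field_simp; ring

end CCA

lemma pow_sub_pow_le_of_le {x y c : ℝ} (hy : 0 ≤ y) (hyx : y ≤ x) (hxc : x ≤ c) (k : ℕ) :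
    x ^ k - y ^ k ≤ k * c ^ (k - 1) * (x - y) := by
  have hx := hy.trans hyx
  calc x ^ k - y ^ k ≤ |x ^ k - y ^ k| := le_abs_self _
    _ ≤ |x - y| * k * max |x| |y| ^ (k - 1) := abs_pow_sub_pow_le ..
    _ = k * x ^ (k - 1) * (x - y) := by
      rw [abs_of_nonneg (sub_nonneg.2 hyx), abs_of_nonneg hx, abs_of_nonneg hy,
        max_eq_left hyx]; ring
    _ ≤ k * c ^ (k - 1) * (x - y) := by gcongr

section Attempts

variable {T : ℝ} {nc : ℕ}

lemma ccaAttempts_nonneg (hT : 0 ≤ T) {t : ℝ} (ht : 0 ≤ t) : 0 ≤ ccaAttempts T nc t :=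
  sum_nonneg fun k _ => pow_nonneg (ccaFailProb_nonneg hT ht) k

lemma ccaAttempts_monotoneOn (hT : 0 ≤ T) : MonotoneOn (ccaAttempts T nc) (Set.Ici 0) :=
  fun _ hs _ _ hst => sum_le_sum fun k _ =>
    pow_le_pow_left₀ (ccaFailProb_nonneg hT hs) (ccaFailProb_monotoneOn hT hs ‹_› hst) k

lemma ccaAttempts_sub_le {αmax s t : ℝ} (hT : 0 ≤ T) (hs : 0 ≤ s) (hst : s ≤ t)
    (hαmax : ccaFailProb T t ≤ αmax) :
    ccaAttempts T nc t - ccaAttempts T nc s ≤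
      (T * ∑ k ∈ range nc, (k : ℝ) * αmax ^ (k - 1)) * (t - s) := by
  have hα_le := ccaFailProb_monotoneOn hT hs (hs.trans hst : (0 : ℝ) ≤ t) hst
  rw [ccaAttempts, ccaAttempts, ← sum_sub_distrib, mul_sum, sum_mul]
  refine sum_le_sum fun k _ => ?_
  calc ccaFailProb T t ^ k - ccaFailProb T s ^ k
      ≤ k * αmax ^ (k - 1) * (ccaFailProb T t - ccaFailProb T s) :=
        pow_sub_pow_le_of_le (ccaFailProb_nonneg hT hs) hα_le hαmax k
    _ ≤ k * αmax ^ (k - 1) * (T * (t - s)) := by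
        have := (ccaFailProb_nonneg hT hs).trans (hα_le.trans hαmax)
        gcongr
        exact ccaFailProb_sub_le hT hs hst
    _ = T * (k * αmax ^ (k - 1)) * (t - s) := by ring

end Attempts

lemma txFailProb_mem_Icc {l t : ℝ} (hl : l ∈ Set.Ico 0 1) (ht : 0 ≤ t) :
    txFailProb l t ∈ Set.Icc 0 1 := by
  have h1 : Real.exp (-12 * t) ≤ 1 := Real.exp_le_one_iff.2 (by linarith)
  have h0 := Real.exp_pos (-12 * t)
  unfold txFailProb
  constructor <;> nlinarith [hl.1, hl.2]

lemma txFailProb_monotone {l : ℝ} (hl : l ≤ 1) : Monotone (txFailProb l) := by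
  intro s t hst
  have : Real.exp (-12 * t) ≤ Real.exp (-12 * s) := Real.exp_le_exp.2 (by linarith)
  unfold txFailProb
  nlinarith

section Discard

variable {nt : ℕ} {b γ : ℝ}

/-- A packet is delivered at attempt `k + 1` iff the first `k` attempts end in a failed
transmission (probability `γ (1 - b)` each) and the next one gets the channel and succeeds. -/
lemma discardProb_eq_one_sub :
    discardProb nt b γ = 1 - (1 - b) * (1 - γ) * ∑ k ∈ range nt, (γ * (1 - b)) ^ k := by
  have := mul_neg_geom_sum (γ * (1 - b)) nt
  unfold discardProb
  linear_combination this

lemma discardProb_le_of_le_left {b₁ b₂ : ℝ} (hγ : γ ∈ Set.Icc 0 1) (hb : b₁ ≤ b₂) (hb₂ : b₂ ≤ 1) :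
    discardProb nt b₁ γ ≤ discardProb nt b₂ γ := by
  rw [discardProb_eq_one_sub, discardProb_eq_one_sub]
  have := hγ.1
  have : 0 ≤ 1 - γ := sub_nonneg.2 hγ.2
  have : 0 ≤ 1 - b₂ := sub_nonneg.2 hb₂
  have : 0 ≤ 1 - b₁ := by linarith
  gcongr

lemma discardProb_le_of_le_right {γ₁ γ₂ : ℝ} (hb : b ∈ Set.Icc 0 1) (hγ₁ : 0 ≤ γ₁)
    (hγ : γ₁ ≤ γ₂) : discardProb nt b γ₁ ≤ discardProb nt b γ₂ := by
  have := hb.1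
  have : 0 ≤ 1 - b := sub_nonneg.2 hb.2
  unfold discardProb
  gcongr

lemma discardProb_monotoneOn {T l : ℝ} {nc : ℕ} (hT : 0 ≤ T) (hl : l ∈ Set.Ico 0 1) :
    MonotoneOn (fun t => discardProb nt (ccaFailProb T t ^ nc) (txFailProb l t)) (Set.Ici 0) := by
  intro s hs t ht hst
  have hαs := ccaFailProb_nonneg hT hs
  have hαt := ccaFailProb_nonneg hT ht
  calc discardProb nt (ccaFailProb T s ^ nc) (txFailProb l s)
      ≤ discardProb nt (ccaFailProb T t ^ nc) (txFailProb l s) :=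
        discardProb_le_of_le_left (txFailProb_mem_Icc hl hs)
          (pow_le_pow_left₀ hαs (ccaFailProb_monotoneOn hT hs ht hst) nc)
          (pow_le_one₀ hαt (ccaFailProb_le_one hT ht))
    _ ≤ discardProb nt (ccaFailProb T t ^ nc) (txFailProb l t) :=
        discardProb_le_of_le_right ⟨pow_nonneg hαt nc, pow_le_one₀ hαt (ccaFailProb_le_one hT ht)⟩
          (txFailProb_mem_Icc hl hs).1 (txFailProb_monotone hl.2.le hst)

end Discard

lemma le_of_le_apply_of_isFixedPt {s : Set ℝ} {f : ℝ → ℝ} {K : ℝ} (hK : K < 1)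
    (hf : ∀ x ∈ s, ∀ y ∈ s, y ≤ x → f x - f y ≤ K * (x - y)) {x y : ℝ} (hx : x ∈ s)
    (hy : y ∈ s) (hxf : x ≤ f x) (hyf : IsFixedPt f y) : x ≤ y := by
  by_contra! hxy
  have := hf x hx y hy hxy.le
  rw [hyf] at this
  nlinarith

section Network

variable {ι : Type*} [Fintype ι] [DecidableEq ι] {s : Set ℝ} {g : ℝ → ℝ} {ν x : ι → ℝ}

lemma exists_forall_le_and_le_sum_mul [Nonempty ι] (hg : MonotoneOn g s)
    (hg0 : ∀ t ∈ s, 0 ≤ g t) (hν : ∀ j, 0 ≤ ν j) (hx : ∀ i, x i ∈ s)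
    (hx_eq : ∀ i, x i = ∑ j ∈ univ.erase i, ν j * g (x j)) :
    ∃ m, (∀ i, x i ≤ x m) ∧ x m ≤ (∑ j, ν j) * g (x m) := by
  obtain ⟨m, -, hm⟩ := exists_max_image univ x univ_nonempty
  refine ⟨m, fun i => hm i (mem_univ i), ?_⟩
  calc x m = ∑ j ∈ univ.erase m, ν j * g (x j) := hx_eq m
    _ ≤ ∑ j ∈ univ.erase m, ν j * g (x m) := by
      gcongr with j
      · exact hν j
      · exact hg (hx j) (hx m) (hm j (mem_univ j))
    _ ≤ ∑ j, ν j * g (x m) :=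
      sum_le_sum_of_subset_of_nonneg (erase_subset _ _)
        fun j _ _ => mul_nonneg (hν j) (hg0 _ (hx m))
    _ = (∑ j, ν j) * g (x m) := (sum_mul ..).symm

lemma le_of_eq_sum_erase (hg : MonotoneOn g s) (hg0 : ∀ t ∈ s, 0 ≤ g t) (hν : ∀ j, 0 ≤ ν j)
    (hx : ∀ i, x i ∈ s) (hx_eq : ∀ i, x i = ∑ j ∈ univ.erase i, ν j * g (x j))
    {L : ℝ} (hL : ∀ t ∈ s, ∀ u ∈ s, u ≤ t → g t - g u ≤ L * (t - u))
    (hSL : (∑ j, ν j) * L < 1) {τ : ℝ} (hτ : τ ∈ s) (hτ_eq : τ = (∑ j, ν j) * g τ) (i : ι) :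
    x i ≤ τ := by
  have : Nonempty ι := ⟨i⟩
  obtain ⟨m, hm, hm_sub⟩ := exists_forall_le_and_le_sum_mul hg hg0 hν hx hx_eq
  refine (hm i).trans (le_of_le_apply_of_isFixedPt (f := fun t => (∑ j, ν j) * g t) hSL
    (fun t ht u hu htu => ?_) (hx m) hτ hm_sub hτ_eq.symm)
  have hS : 0 ≤ ∑ j, ν j := sum_nonneg fun j _ => hν j
  have := mul_le_mul_of_nonneg_left (hL t ht u hu htu) hS
  linarith

end Network

theorem stmt15_general (T l : ℝ) (hT : 0 < T) (hl : l ∈ Set.Ico (0 : ℝ) 1)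
    (nc nt : ℕ)
    (αmax : ℝ) (hαmax : αmax ∈ Set.Ioo (0 : ℝ) 1)
    (a : ℝ) (ha : a = αmax / (T * (1 - αmax)))
    (N : ℕ) (ν : Fin N → ℝ) (hν : ∀ j, 0 ≤ ν j)
    (hS : (∑ j, ν j) <
      min (a / ∑ k ∈ Finset.range nc, αmax ^ k)
          (1 / (T * ∑ k ∈ Finset.range nc, (k : ℝ) * αmax ^ (k - 1))))
    (x : Fin N → ℝ) (hx_mem : ∀ i, x i ∈ Set.Icc (0 : ℝ) a)
    (hx_eq : ∀ i : Fin N, x i = ∑ j ∈ Finset.univ.erase i,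
      ν j * ∑ k ∈ Finset.range nc, (T * x j / (1 + T * x j)) ^ k)
    (τ : ℝ) (hτ_mem : τ ∈ Set.Icc (0 : ℝ) a)
    (hτ_eq : τ = (∑ j, ν j) * ∑ k ∈ Finset.range nc, (T * τ / (1 + T * τ)) ^ k)
    (τmax : ℝ)
    (hττ : τ ≤ τmax) :
    (∀ i : Fin N,
      (T * x i / (1 + T * x i)) ^ nc *
          (∑ k ∈ Finset.range nt,
            ((l + (1 - l) * (1 - Real.exp (-12 * x i))) *
              (1 - (T * x i / (1 + T * x i)) ^ nc)) ^ k) +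
        ((l + (1 - l) * (1 - Real.exp (-12 * x i))) *
          (1 - (T * x i / (1 + T * x i)) ^ nc)) ^ nt
      ≤ (T * τmax / (1 + T * τmax)) ^ nc *
          (∑ k ∈ Finset.range nt,
            ((l + (1 - l) * (1 - Real.exp (-12 * τmax))) *
              (1 - (T * τmax / (1 + T * τmax)) ^ nc)) ^ k) +
        ((l + (1 - l) * (1 - Real.exp (-12 * τmax))) *
          (1 - (T * τmax / (1 + T * τmax)) ^ nc)) ^ nt) ∧
    (∀ δbar : ℝ,
      (T * τmax / (1 + T * τmax)) ^ nc *
          (∑ k ∈ Finset.range nt,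
            ((l + (1 - l) * (1 - Real.exp (-12 * τmax))) *
              (1 - (T * τmax / (1 + T * τmax)) ^ nc)) ^ k) +
        ((l + (1 - l) * (1 - Real.exp (-12 * τmax))) *
          (1 - (T * τmax / (1 + T * τmax)) ^ nc)) ^ nt ≤ δbar →
      ∀ i : Fin N,
        (T * x i / (1 + T * x i)) ^ nc *
            (∑ k ∈ Finset.range nt,
              ((l + (1 - l) * (1 - Real.exp (-12 * x i))) *
                (1 - (T * x i / (1 + T * x i)) ^ nc)) ^ k) +
          ((l + (1 - l) * (1 - Real.exp (-12 * x i))) *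
            (1 - (T * x i / (1 + T * x i)) ^ nc)) ^ nt ≤ δbar) := by
  set L := T * ∑ k ∈ range nc, (k : ℝ) * αmax ^ (k - 1)
  have hL0 : 0 ≤ L :=
    mul_nonneg hT.le (sum_nonneg fun k _ => mul_nonneg k.cast_nonneg (pow_nonneg hαmax.1.le _))
  have hSL : (∑ j, ν j) * L < 1 := by
    rcases hL0.eq_or_lt with hL | hL
    · rw [← hL, mul_zero]; exact one_pos
    · exact (lt_div_iff₀ hL).1 (hS.trans_le (min_le_right _ _))
  have hα_le : ∀ t ∈ Set.Icc 0 a, ccaFailProb T t ≤ αmax := fun t ht => by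
    have := ccaFailProb_monotoneOn hT.le ht.1 (ht.1.trans ht.2) ht.2
    rwa [ha, ccaFailProb_div_mul_one_sub hT.ne' hαmax.2.ne] at this
  have hxτ : ∀ i, x i ≤ τ :=
    le_of_eq_sum_erase (g := ccaAttempts T nc)
      ((ccaAttempts_monotoneOn hT.le).mono fun t ht => ht.1)
      (fun t ht => ccaAttempts_nonneg hT.le ht.1) hν hx_mem hx_eq
      (fun t ht u hu htu => ccaAttempts_sub_le hT.le hu.1 htu (hα_le t ht)) hSL hτ_mem hτ_eq
  have hδ : ∀ i, discardProb nt (ccaFailProb T (x i) ^ nc) (txFailProb l (x i)) ≤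
      discardProb nt (ccaFailProb T τmax ^ nc) (txFailProb l τmax) := fun i =>
    discardProb_monotoneOn hT.le hl (hx_mem i).1 ((hx_mem i).1.trans ((hxτ i).trans hττ))
      ((hxτ i).trans hττ)
  exact ⟨hδ, fun δbar h i => (hδ i).trans h⟩

/-- In the uniqueness regime, if the scalar fixed point `τ̄` satisfies
`τ̄ ≤ τ_max` where `τ_max ∈ [0,a]` is such that `α(τ_max)^{n_c} ≤ 1/n_t` and
`γ(τ_max)^{n_t} ≤ 1/n_t`, then every per-node discard probability
`δ(α(τ̄_{−i}), γ(τ̄_{−i}))` is at most `δ(α(τ_max), γ(τ_max))`; in particular, if the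
latter is at most a target `δ̄`, then every node's discard probability is at most `δ̄`.
Here `α(τ) = Tτ/(1+Tτ)`, `γ(τ) = l + (1−l)(1 − e^{−12τ})`,
`δ(α,γ) = α^{n_c} ∑_{k<n_t} r^k + r^{n_t}` with `r = γ(1−α^{n_c})`. -/
theorem stmt15 (T l : ℝ) (hT : 0 < T) (hl : l ∈ Set.Ico (0 : ℝ) 1)
    (nc nt : ℕ) (hnc : 1 ≤ nc) (hnt : 1 ≤ nt)
    (αmax : ℝ) (hαmax : αmax ∈ Set.Ioo (0 : ℝ) 1)
    (a : ℝ) (ha : a = αmax / (T * (1 - αmax)))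
    (N : ℕ) (ν : Fin N → ℝ) (hν : ∀ j, 0 ≤ ν j)
    (hS : (∑ j, ν j) <
      min (a / ∑ k ∈ Finset.range nc, αmax ^ k)
          (1 / (T * ∑ k ∈ Finset.range nc, (k : ℝ) * αmax ^ (k - 1))))
    (x : Fin N → ℝ) (hx_mem : ∀ i, x i ∈ Set.Icc (0 : ℝ) a)
    (hx_eq : ∀ i : Fin N, x i = ∑ j ∈ Finset.univ.erase i,
      ν j * ∑ k ∈ Finset.range nc, (T * x j / (1 + T * x j)) ^ k)
    (τ : ℝ) (hτ_mem : τ ∈ Set.Icc (0 : ℝ) a)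
    (hτ_eq : τ = (∑ j, ν j) * ∑ k ∈ Finset.range nc, (T * τ / (1 + T * τ)) ^ k)
    (τmax : ℝ) (hτmax_mem : τmax ∈ Set.Icc (0 : ℝ) a)
    (hτmax_α : (T * τmax / (1 + T * τmax)) ^ nc ≤ 1 / (nt : ℝ))
    (hτmax_γ : (l + (1 - l) * (1 - Real.exp (-12 * τmax))) ^ nt ≤ 1 / (nt : ℝ))
    (hττ : τ ≤ τmax) :
    (∀ i : Fin N,
      (T * x i / (1 + T * x i)) ^ nc *
          (∑ k ∈ Finset.range nt,
            ((l + (1 - l) * (1 - Real.exp (-12 * x i))) *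
              (1 - (T * x i / (1 + T * x i)) ^ nc)) ^ k) +
        ((l + (1 - l) * (1 - Real.exp (-12 * x i))) *
          (1 - (T * x i / (1 + T * x i)) ^ nc)) ^ nt
      ≤ (T * τmax / (1 + T * τmax)) ^ nc *
          (∑ k ∈ Finset.range nt,
            ((l + (1 - l) * (1 - Real.exp (-12 * τmax))) *
              (1 - (T * τmax / (1 + T * τmax)) ^ nc)) ^ k) +
        ((l + (1 - l) * (1 - Real.exp (-12 * τmax))) *
          (1 - (T * τmax / (1 + T * τmax)) ^ nc)) ^ nt) ∧
    (∀ δbar : ℝ,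
      (T * τmax / (1 + T * τmax)) ^ nc *
          (∑ k ∈ Finset.range nt,
            ((l + (1 - l) * (1 - Real.exp (-12 * τmax))) *
              (1 - (T * τmax / (1 + T * τmax)) ^ nc)) ^ k) +
        ((l + (1 - l) * (1 - Real.exp (-12 * τmax))) *
          (1 - (T * τmax / (1 + T * τmax)) ^ nc)) ^ nt ≤ δbar →
      ∀ i : Fin N,
        (T * x i / (1 + T * x i)) ^ nc *
            (∑ k ∈ Finset.range nt,
              ((l + (1 - l) * (1 - Real.exp (-12 * x i))) *
                (1 - (T * x i / (1 + T * x i)) ^ nc)) ^ k) +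
          ((l + (1 - l) * (1 - Real.exp (-12 * x i))) *
            (1 - (T * x i / (1 + T * x i)) ^ nc)) ^ nt ≤ δbar) :=
  stmt15_general T l hT hl nc nt αmax hαmax a ha N ν hν hS x hx_mem hx_eq τ hτ_mem hτ_eq τmax hττ
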